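/- arXiv:1709.07427 — 2 statements merged into one kernel-verified Lean document; each statement's English description precedes it below -/
import Mathlib

section
/- For every y > 0 and every nonzero integer n, 2π·∫_{−∞}^{∞} (H∇p₀(x,y)) · (∇pₙ(x,y)) dx = πn·(3y² − π²n²)/(y² + π²n²)³, where H is the rotation matrix sending (a,b) to (−b,a), p₀(x,y) = (1/π)·y/(x² + y²), and pₙ(x,y) = (1/π)·y/((x − 2πn)² + y²). -/
/-!
With `a = 2πn`, `A = x² + y²` and `B = (x - a)² + y²`, the integrand equals
`(2/π²) · y a (x² - a x + y²) / (A² B²)`. Partial fractions give this rational function an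
explicit primitive made of rational terms, `log A - log B` and `arctan (x/y) + arctan ((x-a)/y)`.
Everything but the arctangent part vanishes at `±∞`, so the integral is the jump `2π` of the
arctangent part times its coefficient.
-/

open Real MeasureTheory

/-- Poisson kernel for the upper half-plane with pole at `2 π n`. -/
noncomputable def p (n : ℤ) (x y : ℝ) : ℝ := (1 / π) * y / ((x - 2 * π * n) ^ 2 + y ^ 2)

open Filter Topology Bornology

variable {a y : ℝ}

/-- Substituting `s = x⁻¹` turns this into a function continuous at `0`. -/
lemma tendsto_linear_div_sq_add_sq_cobounded (b c y : ℝ) :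
    Tendsto (fun x : ℝ => (b * x + c) / (x ^ 2 + y ^ 2)) (cobounded ℝ) (𝓝 0) := by
  have hcont : Continuous fun s : ℝ => (b * s + c * s ^ 2) / (1 + y ^ 2 * s ^ 2) := by
    fun_prop (disch := intro s; positivity)
  have h := (hcont.tendsto 0).comp tendsto_inv₀_cobounded
  simp only [ne_eq, OfNat.ofNat_ne_zero, not_false_eq_true, zero_pow, mul_zero, add_zero,
    zero_div] at h
  refine h.congr' ((eventually_ne_cobounded 0).mono fun x hx => ?_)
  simp only [Function.comp_apply]
  field_simp

lemma tendsto_log_sub_log_cobounded (a : ℝ) (hy : y ≠ 0) :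
    Tendsto (fun x : ℝ => log (x ^ 2 + y ^ 2) - log ((x - a) ^ 2 + y ^ 2))
      (cobounded ℝ) (𝓝 0) := by
  have hratio := ((tendsto_linear_div_sq_add_sq_cobounded (2 * a) (a ^ 2) y).comp
    (tendsto_sub_const_cobounded a)).const_add 1
  rw [add_zero] at hratio
  have h := (continuousAt_log one_ne_zero).tendsto.comp hratio
  rw [log_one] at h
  refine h.congr fun x => ?_
  have hA : x ^ 2 + y ^ 2 ≠ 0 := by positivity
  have hB : (x - a) ^ 2 + y ^ 2 ≠ 0 := by positivity
  rw [Function.comp_apply, Function.comp_apply, ← log_div hA hB]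
  congr 1
  field_simp
  ring

lemma tendsto_arctan_sub_div_atTop (a : ℝ) (hy : 0 < y) :
    Tendsto (fun x => arctan ((x - a) / y)) atTop (𝓝 (π / 2)) :=
  (tendsto_nhds_of_tendsto_nhdsWithin tendsto_arctan_atTop).comp
    ((tendsto_atTop_add_const_right atTop (-a) tendsto_id).atTop_div_const hy)

lemma tendsto_arctan_sub_div_atBot (a : ℝ) (hy : 0 < y) :
    Tendsto (fun x => arctan ((x - a) / y)) atBot (𝓝 (-(π / 2))) :=
  (tendsto_nhds_of_tendsto_nhdsWithin tendsto_arctan_atBot).comp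
    ((tendsto_atBot_add_const_right atBot (-a) tendsto_id).atBot_div_const hy)

lemma integrable_inv_sq_add_sq (hy : y ≠ 0) : Integrable fun x : ℝ => (x ^ 2 + y ^ 2)⁻¹ := by
  refine ((integrable_inv_one_add_sq.comp_div hy).const_mul (y ^ 2)⁻¹).congr
    (ae_of_all _ fun x => ?_)
  simp only
  field_simp
  ring

lemma hasDerivAt_p_fst (k : ℤ) (hy : y ≠ 0) (x : ℝ) :
    HasDerivAt (fun s => p k s y)
      (-(2 * y / π) * (x - 2 * π * k) / ((x - 2 * π * k) ^ 2 + y ^ 2) ^ 2) x := by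
  have hB : (x - 2 * π * k) ^ 2 + y ^ 2 ≠ 0 := by positivity
  have hden := (((hasDerivAt_id' x).sub_const (2 * π * k)).fun_pow 2).add_const (y ^ 2)
  refine ((hasDerivAt_const x (1 / π * y)).fun_div hden hB).congr_deriv ?_
  field_simp
  ring

lemma hasDerivAt_p_snd (k : ℤ) (x : ℝ) (hy : y ≠ 0) :
    HasDerivAt (fun t => p k x t)
      (1 / π * ((x - 2 * π * k) ^ 2 - y ^ 2) / ((x - 2 * π * k) ^ 2 + y ^ 2) ^ 2) y := by
  have hB : (x - 2 * π * k) ^ 2 + y ^ 2 ≠ 0 := by positivity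
  have hden := (hasDerivAt_pow 2 y).const_add ((x - 2 * π * k) ^ 2)
  refine (((hasDerivAt_id' y).const_mul (1 / π)).fun_div hden hB).congr_deriv ?_
  field_simp
  ring

noncomputable def pairingDensity (a y x : ℝ) : ℝ :=
  y * a * (x ^ 2 - a * x + y ^ 2) / ((x ^ 2 + y ^ 2) ^ 2 * ((x - a) ^ 2 + y ^ 2) ^ 2)

lemma Hgrad_p0_dot_grad_pn_eq (hy : y ≠ 0) (n : ℤ) (x : ℝ) :
    -(deriv (fun t => p 0 x t) y) * deriv (fun s => p n s y) x
        + deriv (fun s => p 0 s y) x * deriv (fun t => p n x t) y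
      = 2 / π ^ 2 * pairingDensity (2 * π * n) y x := by
  rw [(hasDerivAt_p_fst 0 hy x).deriv, (hasDerivAt_p_fst n hy x).deriv,
    (hasDerivAt_p_snd 0 x hy).deriv, (hasDerivAt_p_snd n x hy).deriv, pairingDensity]
  have hA : x ^ 2 + y ^ 2 ≠ 0 := by positivity
  have hB : (x - 2 * π * n) ^ 2 + y ^ 2 ≠ 0 := by positivity
  push_cast
  field_simp
  ring

lemma integrable_pairingDensity (a : ℝ) (hy : y ≠ 0) : Integrable (pairingDensity a y) := by
  refine ((integrable_inv_sq_add_sq hy).const_mul (|y * a| / y ^ 4)).mono'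
    (Measurable.aestronglyMeasurable (by unfold pairingDensity; fun_prop))
    (ae_of_all _ fun x => ?_)
  set A := x ^ 2 + y ^ 2
  set B := (x - a) ^ 2 + y ^ 2
  have hA : y ^ 2 ≤ A := by simp only [A]; nlinarith [sq_nonneg x]
  have hB : y ^ 2 ≤ B := by simp only [B]; nlinarith [sq_nonneg (x - a)]
  have hN : |x ^ 2 - a * x + y ^ 2| ≤ (A + B) / 2 := by
    rw [abs_le]
    constructor <;> nlinarith [sq_nonneg (2 * x - a), sq_nonneg a]
  have hAB : (A + B) / 2 / (A ^ 2 * B ^ 2) ≤ 1 / y ^ 4 * A⁻¹ := by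
    have hy4B : y ^ 4 ≤ B ^ 2 := by nlinarith
    have hy4AB : y ^ 4 ≤ A * B := by nlinarith
    calc (A + B) / 2 / (A ^ 2 * B ^ 2) ≤ 1 / (y ^ 4 * A) := by
          rw [div_le_div_iff₀ (by positivity) (by positivity)]
          nlinarith [mul_le_mul_of_nonneg_left hy4B (sq_nonneg A),
            mul_le_mul_of_nonneg_left hy4AB (by positivity : 0 ≤ A * B)]
      _ = 1 / y ^ 4 * A⁻¹ := by rw [one_div, one_div, mul_inv]
  calc ‖pairingDensity a y x‖ = |y * a| * (|x ^ 2 - a * x + y ^ 2| / (A ^ 2 * B ^ 2)) := by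
        rw [pairingDensity, norm_div, norm_mul, Real.norm_eq_abs, Real.norm_eq_abs,
          Real.norm_of_nonneg (by positivity), mul_div_assoc]
    _ ≤ |y * a| * ((A + B) / 2 / (A ^ 2 * B ^ 2)) := by gcongr
    _ ≤ |y * a| * (1 / y ^ 4 * A⁻¹) := by gcongr
    _ = |y * a| / y ^ 4 * A⁻¹ := by ring

noncomputable def pairingPrimitive (a y x : ℝ) : ℝ :=
  ((a ^ 2 - 4 * y ^ 2) * (a ^ 2 + 4 * y ^ 2) * (y / (x ^ 2 + y ^ 2) - y / ((x - a) ^ 2 + y ^ 2))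
    + 4 * a * y * (a ^ 2 + 4 * y ^ 2) * (x / (x ^ 2 + y ^ 2) + (x - a) / ((x - a) ^ 2 + y ^ 2))
    - (6 * a ^ 2 * y - 8 * y ^ 3) * (log (x ^ 2 + y ^ 2) - log ((x - a) ^ 2 + y ^ 2))
    - 2 * (a ^ 3 - 12 * a * y ^ 2) * (arctan (x / y) + arctan ((x - a) / y)))
    / (2 * (a ^ 2 + 4 * y ^ 2) ^ 3)

lemma hasDerivAt_pairingPrimitive (hy : y ≠ 0) (x : ℝ) :
    HasDerivAt (pairingPrimitive a y) (pairingDensity a y x) x := by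
  have hA : x ^ 2 + y ^ 2 ≠ 0 := by positivity
  have hB : (x - a) ^ 2 + y ^ 2 ≠ 0 := by positivity
  have hR : a ^ 2 + 4 * y ^ 2 ≠ 0 := by positivity
  have dA : HasDerivAt (fun x => x ^ 2 + y ^ 2) (2 * x) x := by
    simpa using (hasDerivAt_pow 2 x).add_const (y ^ 2)
  have dB : HasDerivAt (fun x => (x - a) ^ 2 + y ^ 2) (2 * (x - a)) x := by
    simpa using (((hasDerivAt_id' x).sub_const a).pow 2).add_const (y ^ 2)
  have dS₁ := (hasDerivAt_arctan (x / y)).comp x ((hasDerivAt_id' x).div_const y)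
  have dS₂ := (hasDerivAt_arctan ((x - a) / y)).comp x
    (((hasDerivAt_id' x).sub_const a).div_const y)
  have H := (((((hasDerivAt_const x y).div dA hA).sub
      ((hasDerivAt_const x y).div dB hB)).const_mul
        ((a ^ 2 - 4 * y ^ 2) * (a ^ 2 + 4 * y ^ 2))).add
    ((((hasDerivAt_id' x).div dA hA).add (((hasDerivAt_id' x).sub_const a).div dB hB)).const_mul
      (4 * a * y * (a ^ 2 + 4 * y ^ 2)))).sub
    (((dA.log hA).sub (dB.log hB)).const_mul (6 * a ^ 2 * y - 8 * y ^ 3))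
    |>.sub ((dS₁.add dS₂).const_mul (2 * (a ^ 3 - 12 * a * y ^ 2)))
    |>.div_const (2 * (a ^ 2 + 4 * y ^ 2) ^ 3)
  refine H.congr_deriv ?_
  rw [pairingDensity]
  field_simp
  ring

lemma tendsto_pairingPrimitive {l : Filter ℝ} {θ : ℝ} (hy : y ≠ 0) (hl : l ≤ cobounded ℝ)
    (hθ : Tendsto (fun x => arctan (x / y) + arctan ((x - a) / y)) l (𝓝 θ)) :
    Tendsto (pairingPrimitive a y) l
      (𝓝 (-(2 * (a ^ 3 - 12 * a * y ^ 2) * θ) / (2 * (a ^ 2 + 4 * y ^ 2) ^ 3))) := by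
  have hA (b c : ℝ) := tendsto_linear_div_sq_add_sq_cobounded b c y
  have hB (b c : ℝ) := (hA b c).comp (tendsto_sub_const_cobounded a)
  have h := (((((hA 0 y).sub (hB 0 y)).const_mul
      ((a ^ 2 - 4 * y ^ 2) * (a ^ 2 + 4 * y ^ 2))).add
    (((hA 1 0).add (hB 1 0)).const_mul (4 * a * y * (a ^ 2 + 4 * y ^ 2)))).sub
    ((tendsto_log_sub_log_cobounded a hy).const_mul (6 * a ^ 2 * y - 8 * y ^ 3))).mono_left hl
    |>.sub (hθ.const_mul (2 * (a ^ 3 - 12 * a * y ^ 2)))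
    |>.div_const (2 * (a ^ 2 + 4 * y ^ 2) ^ 3)
  simp only [sub_zero, mul_zero, add_zero, zero_add, zero_sub, zero_mul, one_mul,
    Function.comp_apply] at h
  exact h

lemma integral_pairingDensity (a : ℝ) (hy : 0 < y) :
    ∫ x, pairingDensity a y x
      = -(2 * π * (a ^ 3 - 12 * a * y ^ 2)) / (a ^ 2 + 4 * y ^ 2) ^ 3 := by
  have hbot := tendsto_pairingPrimitive (a := a) hy.ne' IsOrderBornology.atBot_le_cobounded
    (by simpa using (tendsto_arctan_sub_div_atBot 0 hy).add (tendsto_arctan_sub_div_atBot a hy))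
  have htop := tendsto_pairingPrimitive (a := a) hy.ne' IsOrderBornology.atTop_le_cobounded
    (by simpa using (tendsto_arctan_sub_div_atTop 0 hy).add (tendsto_arctan_sub_div_atTop a hy))
  rw [integral_of_hasDerivAt_of_tendsto (hasDerivAt_pairingPrimitive hy.ne')
    (integrable_pairingDensity a hy.ne') hbot htop]
  have hR : a ^ 2 + 4 * y ^ 2 ≠ 0 := by positivity
  field_simp
  ring

theorem integral_Hgrad_p0_dot_grad_pn_general (y : ℝ) (hy : 0 < y) (n : ℤ) :
    2 * π * ∫ x : ℝ,
        (-(deriv (fun t => p 0 x t) y) * deriv (fun s => p n s y) x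
          + deriv (fun s => p 0 s y) x * deriv (fun t => p n x t) y)
      = π * n * (3 * y ^ 2 - π ^ 2 * n ^ 2) / (y ^ 2 + π ^ 2 * n ^ 2) ^ 3 := by
  simp_rw [Hgrad_p0_dot_grad_pn_eq hy.ne', integral_const_mul, integral_pairingDensity _ hy]
  have hπ : π ≠ 0 := pi_ne_zero
  have hR : y ^ 2 + π ^ 2 * n ^ 2 ≠ 0 := by positivity
  field_simp
  ring

theorem integral_Hgrad_p0_dot_grad_pn (y : ℝ) (hy : 0 < y) (n : ℤ) (hn : n ≠ 0) :
    2 * π * ∫ x : ℝ,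
        (-(deriv (fun t => p 0 x t) y) * deriv (fun s => p n s y) x
          + deriv (fun s => p 0 s y) x * deriv (fun t => p n x t) y)
      = π * n * (3 * y ^ 2 - π ^ 2 * n ^ 2) / (y ^ 2 + π ^ 2 * n ^ 2) ^ 3 :=
  integral_Hgrad_p0_dot_grad_pn_general y hy n
end

section
/- For x₀ = 0, y₀ ≥ 2πn with n a positive integer, and all x ∈ ℝ, y > 0 with y ≠ y₀: G(x,y)/pₙ(0,y₀) ≤ y·g(y/y₀), where G(x,y) = (1/(2π))·log((x² + (y+y₀)²)/(x² + (y−y₀)²)), pₙ(0,y₀) = (1/π)·y₀/((2πn)² + y₀²), and g(t) = t⁻¹·log(1 + 4t/(t−1)²). -/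
/-!
Write `a = (y + y₀)²` and `b = (y - y₀)²`, so `0 < b ≤ a`. Since `1 + 4t/(t-1)² = (t+1)²/(t-1)²`,
the right-hand side is exactly `y₀ log (a / b)`. On the left, adding `x²` to numerator and
denominator only moves `a / b` towards `1`, so `G ≤ (1/2π) log (a / b)`; and `2πn ≤ y₀` gives
`pₙ(0, y₀) ≥ 1 / (2π y₀)`.
-/

open Real

lemma log_add_div_add_le_log_div {a b c : ℝ} (hb : 0 < b) (hba : b ≤ a) (hc : 0 ≤ c) :
    log ((c + a) / (c + b)) ≤ log (a / b) := by
  apply log_le_log (div_pos (by linarith) (by linarith))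
  rw [div_le_div_iff₀ (by positivity) hb]
  nlinarith

lemma log_add_div_add_nonneg {a b c : ℝ} (hcb : 0 < c + b) (hba : b ≤ a) :
    0 ≤ log ((c + a) / (c + b)) :=
  log_nonneg <| (one_le_div hcb).mpr (by linarith)

lemma one_add_four_mul_div_sub_one_sq {t : ℝ} (ht : t ≠ 1) :
    1 + 4 * t / (t - 1) ^ 2 = (t + 1) ^ 2 / (t - 1) ^ 2 := by
  have : t - 1 ≠ 0 := sub_ne_zero.mpr ht
  field_simp
  ring

lemma mul_inv_mul_log_one_add_four_mul_div {y y₀ : ℝ} (hy : y ≠ 0) (hy₀ : y₀ ≠ 0)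
    (hne : y ≠ y₀) :
    y * ((y / y₀)⁻¹ * log (1 + 4 * (y / y₀) / (y / y₀ - 1) ^ 2))
      = y₀ * log ((y + y₀) ^ 2 / (y - y₀) ^ 2) := by
  rw [one_add_four_mul_div_sub_one_sq ((div_eq_one_iff_eq hy₀).not.mpr hne), div_add_one hy₀,
    div_sub_one hy₀, div_pow, div_pow, div_div_div_cancel_right₀ (pow_ne_zero 2 hy₀),
    inv_div, ← mul_assoc, mul_div_cancel₀ _ hy]

lemma div_poissonKernel_le {s y₀ L : ℝ} (hy₀ : 0 < y₀) (hs : s ^ 2 ≤ y₀ ^ 2) (hL : 0 ≤ L) :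
    1 / (2 * π) * L / (1 / π * y₀ / (s ^ 2 + y₀ ^ 2)) ≤ y₀ * L :=
  calc _ = L * (s ^ 2 + y₀ ^ 2) / (2 * y₀) := by field_simp
    _ ≤ L * (2 * y₀ ^ 2) / (2 * y₀) := by gcongr; linarith
    _ = y₀ * L := by field_simp

theorem green_ratio_bound (n : ℕ) (hn : 0 < n) (y₀ : ℝ) (hy₀ : 2 * π * n ≤ y₀)
    (x : ℝ) (y : ℝ) (hy : 0 < y) (hne : y ≠ y₀) :
    ((1 / (2 * π)) * Real.log ((x ^ 2 + (y + y₀) ^ 2) / (x ^ 2 + (y - y₀) ^ 2)))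
        / ((1 / π) * y₀ / ((2 * π * n) ^ 2 + y₀ ^ 2))
      ≤ y * ((y / y₀)⁻¹ * Real.log (1 + 4 * (y / y₀) / (y / y₀ - 1) ^ 2)) := by
  have hy₀pos : 0 < y₀ := lt_of_lt_of_le (by positivity) hy₀
  have hb : 0 < (y - y₀) ^ 2 := sq_pos_of_ne_zero (sub_ne_zero.mpr hne)
  have hba : (y - y₀) ^ 2 ≤ (y + y₀) ^ 2 := by nlinarith
  rw [mul_inv_mul_log_one_add_four_mul_div hy.ne' hy₀pos.ne' hne]
  calc _ ≤ y₀ * log ((x ^ 2 + (y + y₀) ^ 2) / (x ^ 2 + (y - y₀) ^ 2)) :=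
        div_poissonKernel_le hy₀pos (pow_le_pow_left₀ (by positivity) hy₀ 2)
          (log_add_div_add_nonneg (by positivity) hba)
    _ ≤ _ := mul_le_mul_of_nonneg_left
        (log_add_div_add_le_log_div hb hba (sq_nonneg x)) hy₀pos.le
end
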